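/- If a finite set 𝒞 of propositional clauses has the termination property, then 𝒞 is renamable-Horn, i.e., there exists a set A of Boolean variables such that r_A(𝒞) consists of Horn clauses. -/
import Mathlib


/-- A propositional literal over variables `V`: either a positive or a negative literal. -/
inductive Lit (V : Type) where
  | pos : V → Lit V
  | neg : V → Lit V
deriving DecidableEq

/-- A propositional clause: a finite multiset of literals. -/
abbrev Clause (V : Type) := Multiset (Lit V)

/-- Whether a literal is positive. -/
def Lit.isPos {V : Type} : Lit V → Bool
  | .pos _ => true
  | .neg _ => false

/-- A Horn clause contains at most one positive literal. -/
def IsHorn {V : Type} (c : Clause V) : Prop :=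
  c.countP (fun l => l.isPos = true) ≤ 1

/-- `Resolvent c₁ c₂ r`: `r` is obtained by binary resolution from `c₁` (containing a
positive literal `p`) and `c₂` (containing the negative literal `¬p`). -/
def Resolvent {V : Type} [DecidableEq V] (c₁ c₂ r : Clause V) : Prop :=
  ∃ p : V, Lit.pos p ∈ c₁ ∧ Lit.neg p ∈ c₂ ∧
    r = c₁.erase (Lit.pos p) + c₂.erase (Lit.neg p)

/-- A set of clauses has the termination property if there is no infinite sequence
`c₀, c₁, c₂, …` of clauses such that `c₀ ∈ 𝒞` and each `cᵢ` (for `i ≥ 1`) is derived by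
binary resolution from `c_{i-1}` and a clause of `𝒞`. -/
def TerminationProperty {V : Type} [DecidableEq V] (𝒞 : Set (Clause V)) : Prop :=
  ¬ ∃ f : ℕ → Clause V, f 0 ∈ 𝒞 ∧
      ∀ i : ℕ, ∃ d ∈ 𝒞, Resolvent (f i) d (f (i + 1)) ∨ Resolvent d (f i) (f (i + 1))

open Classical in
/-- Renaming of a literal with respect to a set `A` of variables: literals whose variable
lies in `A` are replaced by their complement, all other literals are unchanged. -/
noncomputable def renameLit {V : Type} (A : Set V) : Lit V → Lit V
  | .pos p => if p ∈ A then .neg p else .pos p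
  | .neg p => if p ∈ A then .pos p else .neg p

namespace RHaux

variable {V : Type} [DecidableEq V]

/-- Complement of a literal. -/
def compl : Lit V → Lit V
  | .pos p => .neg p
  | .neg p => .pos p

omit [DecidableEq V] in
@[simp] lemma compl_compl (l : Lit V) : compl (compl l) = l := by cases l <;> rfl

/-- Single-step relation: from a literal `m` we can move to `m'` if some clause of `𝒞`
contains the complement of `m` together with (another occurrence of) `m'`. -/
def Rel (𝒞 : Set (Clause V)) (m m' : Lit V) : Prop :=
  ∃ c ∈ 𝒞, compl m ∈ c ∧ m' ∈ c.erase (compl m)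

/-- Termination implies every literal is accessible for the flipped relation. -/
lemma acc_of_term (𝒞 : Set (Clause V)) (hterm : TerminationProperty 𝒞) (m : Lit V) :
    Acc (fun a b => Rel 𝒞 b a) m := by
  classical
  by_contra hm
  set r : Lit V → Lit V → Prop := fun a b => Rel 𝒞 b a with hr
  -- from non-accessibility, build an infinite Rel-chain
  have step : ∀ x : {x : Lit V // ¬ Acc r x}, ∃ y : {x : Lit V // ¬ Acc r x}, Rel 𝒞 x.1 y.1 := by
    rintro ⟨x, hx⟩
    by_contra hno
    push_neg at hno
    apply hx
    constructor
    intro y hy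
    by_contra hy'
    exact hno ⟨y, hy'⟩ hy
  choose nxt hnxt using step
  let g : ℕ → {x : Lit V // ¬ Acc r x} := fun n => Nat.rec ⟨m, hm⟩ (fun _ p => nxt p) n
  have hg : ∀ n, Rel 𝒞 (g n).1 (g (n + 1)).1 := fun n => hnxt (g n)
  -- choose witnessing clauses
  choose d hd𝒞 hdc hde using hg
  -- build the resolution sequence
  let F : ℕ → Clause V := fun n => Nat.rec (d 0) (fun k prev =>
    match (g (k + 1)).1 with
    | .pos p => prev.erase (.pos p) + (d (k + 1)).erase (.neg p)
    | .neg p => (d (k + 1)).erase (.pos p) + prev.erase (.neg p)) n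
  have hF0 : F 0 = d 0 := rfl
  have hFsucc : ∀ k, F (k + 1) =
      match (g (k + 1)).1 with
      | .pos p => (F k).erase (.pos p) + (d (k + 1)).erase (.neg p)
      | .neg p => (d (k + 1)).erase (.pos p) + (F k).erase (.neg p) := fun k => rfl
  have hinv : ∀ n, (g (n + 1)).1 ∈ F n := by
    intro n
    induction n with
    | zero => exact Multiset.mem_of_mem_erase (hde 0)
    | succ k ih =>
      have h2 := hde (k + 1)
      rw [hFsucc k]
      cases hgk : (g (k + 1)).1 with
      | pos p =>
        simp only [hgk]
        have : (g (k + 2)).1 ∈ (d (k + 1)).erase (Lit.neg p) := by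
          rw [hgk] at h2; exact h2
        exact Multiset.mem_add.mpr (Or.inr this)
      | neg p =>
        simp only [hgk]
        have : (g (k + 2)).1 ∈ (d (k + 1)).erase (Lit.pos p) := by
          rw [hgk] at h2; exact h2
        exact Multiset.mem_add.mpr (Or.inl this)
  apply hterm
  refine ⟨F, hF0 ▸ hd𝒞 0, ?_⟩
  intro i
  refine ⟨d (i + 1), hd𝒞 (i + 1), ?_⟩
  have hmem : (g (i + 1)).1 ∈ F i := hinv i
  have hc := hdc (i + 1)
  cases hgi : (g (i + 1)).1 with
  | pos p =>
    left
    refine ⟨p, hgi ▸ hmem, ?_, ?_⟩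
    · rw [hgi] at hc; exact hc
    · rw [hFsucc i, hgi]
  | neg p =>
    right
    refine ⟨p, ?_, hgi ▸ hmem, ?_⟩
    · rw [hgi] at hc; exact hc
    · rw [hFsucc i, hgi]

lemma exists_pair_of_two_le_countP {α : Type*} [DecidableEq α] (p : α → Prop) [DecidablePred p]
    (s : Multiset α) (h : 2 ≤ s.countP p) :
    ∃ a ∈ s, p a ∧ ∃ b ∈ s.erase a, p b := by
  rw [Multiset.countP_eq_card_filter] at h
  obtain ⟨a, ha⟩ := Multiset.card_pos_iff_exists_mem.mp
    (show 0 < Multiset.card (s.filter p) by omega)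
  refine ⟨a, Multiset.mem_of_mem_filter ha, Multiset.of_mem_filter ha, ?_⟩
  have h2 : 0 < Multiset.card ((s.filter p).erase a) := by
    rw [Multiset.card_erase_of_mem ha, Nat.pred_eq_sub_one]; omega
  obtain ⟨b, hb⟩ := Multiset.card_pos_iff_exists_mem.mp h2
  exact ⟨b, Multiset.mem_of_le (Multiset.erase_le_erase a (Multiset.filter_le p s)) hb,
    Multiset.of_mem_filter (Multiset.mem_of_mem_erase hb)⟩

end RHaux

/-- If a finite set of propositional clauses has the termination property, then it is
renamable-Horn: there is a set `A` of variables such that renaming w.r.t. `A` turns every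
clause into a Horn clause. -/
theorem renamableHorn_of_terminationProperty {V : Type} [DecidableEq V]
    (𝒞 : Set (Clause V)) (hfin : 𝒞.Finite) (hterm : TerminationProperty 𝒞) :
    ∃ A : Set V, ∀ c ∈ 𝒞, IsHorn (c.map (renameLit A)) := by
  classical
  open RHaux in
  have acc := RHaux.acc_of_term 𝒞 hterm
  set rk : Lit V → Ordinal := fun m => (acc m).rank with hrk
  have hlt : ∀ {m m' : Lit V}, RHaux.Rel 𝒞 m m' → rk m' < rk m := by
    intro m m' h
    exact Acc.rank_lt_of_rel (acc m) h
  refine ⟨{p | rk (.pos p) ≤ rk (.neg p)}, ?_⟩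
  intro c hc
  by_contra hnh
  unfold IsHorn at hnh
  push_neg at hnh
  set A : Set V := {p | rk (.pos p) ≤ rk (.neg p)}
  have key : ∀ l : Lit V, (renameLit A l).isPos = true → rk (RHaux.compl l) ≤ rk l := by
    intro l hl
    cases l with
    | pos p =>
      by_cases hp : p ∈ A
      · simp [renameLit, hp, Lit.isPos] at hl
      · exact le_of_lt (lt_of_not_ge hp)
    | neg p =>
      by_cases hp : p ∈ A
      · exact hp
      · simp [renameLit, hp, Lit.isPos] at hl
  have h2 : 2 ≤ c.countP (fun l => (renameLit A l).isPos = true) := by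
    have := Multiset.countP_map (renameLit A) c (fun l => Lit.isPos l = true)
    rw [this, ← Multiset.countP_eq_card_filter] at hnh
    omega
  obtain ⟨l, hlmem, hlQ, l', hl'mem, hl'Q⟩ :=
    RHaux.exists_pair_of_two_le_countP _ c h2
  have e1 : RHaux.Rel 𝒞 (RHaux.compl l) l' := by
    refine ⟨c, hc, ?_, ?_⟩ <;> rw [RHaux.compl_compl]
    · exact hlmem
    · exact hl'mem
  have e2 : RHaux.Rel 𝒞 (RHaux.compl l') l := by
    refine ⟨c, hc, ?_, ?_⟩ <;> rw [RHaux.compl_compl]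
    · exact Multiset.mem_of_mem_erase hl'mem
    · by_cases hll : l = l'
      · subst hll; exact hl'mem
      · exact (Multiset.mem_erase_of_ne hll).mpr hlmem
  have c1 : rk l' < rk (RHaux.compl l) := hlt e1
  have c2 : rk l < rk (RHaux.compl l') := hlt e2
  have c3 : rk (RHaux.compl l) ≤ rk l := key l hlQ
  have c4 : rk (RHaux.compl l') ≤ rk l' := key l' hl'Q
  exact absurd (lt_trans (lt_of_lt_of_le c2 c4) (lt_of_lt_of_le c1 c3)) (lt_irrefl _)
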